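/- arXiv:0904.0927 — 4 statements merged into one kernel-verified Lean document; each statement's English description precedes it below -/
import Mathlib

section
/- Let k be a field, n ≥ 1, and R = k[x_1, …, x_n]. For a subset I ⊆ {1,…,n} write R_I := R/(x_i : i ∈ I), with R_∅ = R. Form the complex C^0 = R, C^q = ⊕_{|I| = q} R_I for 1 ≤ q ≤ n, whose differential C^q → C^{q+1} has, for I ⊂ J with J = I ∪ {j}, component equal to (−1)^{s} times the canonical surjection R_I → R_J, where s is the number of elements of J smaller than j (Čech-style alternating signs). Then d ∘ d = 0, the kernel of C^0 → C^1 is the principal ideal (x_1 ⋯ x_n), the complex is exact at C^q for every 1 ≤ q ≤ n−1, and the last differential C^{n−1} → C^n = R/(x_1,…,x_n) is surjective. Equivalently, the augmented complex 0 → (x_1⋯x_n) → R → ⊕_i R/(x_i) → ⊕_{i<j} R/(x_i,x_j) → ⋯ → R/(x_1,…,x_n) → 0 is exact. -/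
set_option maxHeartbeats 1000000

noncomputable section

open MvPolynomial
open scoped DirectSum

/-- The ideal `(x_i : i ∈ I)` of `k[x_1,…,x_n]` generated by the variables indexed by
`I ⊆ {1,…,n}`. -/
def idlOf (k : Type*) [Field k] (n : ℕ) (I : Finset (Fin n)) :
    Ideal (MvPolynomial (Fin n) k) :=
  Ideal.span (MvPolynomial.X '' (I : Set (Fin n)))

/-- The `q`-th term `C^q = ⊕_{|I| = q} R/(x_i : i ∈ I)` of the Čech-style complex. -/
abbrev KosC (k : Type*) [Field k] (n q : ℕ) : Type _ :=
  ⨁ (I : {I : Finset (Fin n) // I.card = q}), (MvPolynomial (Fin n) k ⧸ idlOf k n I.1)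

/-- The canonical surjection `R_I → R_J` for `I ⊆ J`, as an `R`-linear map. -/
def quotFactor (k : Type*) [Field k] (n : ℕ) {I J : Finset (Fin n)} (h : I ⊆ J) :
    (MvPolynomial (Fin n) k ⧸ idlOf k n I) →ₗ[MvPolynomial (Fin n) k]
      (MvPolynomial (Fin n) k ⧸ idlOf k n J) :=
  Submodule.mapQ _ _ LinearMap.id
    (by
      intro x hx
      exact Ideal.span_mono (Set.image_mono (by exact_mod_cast h)) hx)

/-- The component of the differential out of the summand indexed by `I`, with Čech-style
alternating signs: the `J = I ∪ {j}`-component is `(-1)^s` times the canonical surjection,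
`s` being the number of elements of `J` smaller than `j`. -/
def kosDAux (k : Type*) [Field k] (n q : ℕ) (I : {I : Finset (Fin n) // I.card = q}) :
    (MvPolynomial (Fin n) k ⧸ idlOf k n I.1) →ₗ[MvPolynomial (Fin n) k] KosC k n (q + 1) :=
  ∑ j : Fin n,
    if h : j ∈ I.1 then 0
    else
      ((-1 : ℤ) ^ (((insert j I.1).filter (fun x => x < j)).card)) •
        (DirectSum.lof (MvPolynomial (Fin n) k) _
            (fun J : {J : Finset (Fin n) // J.card = q + 1} =>
              MvPolynomial (Fin n) k ⧸ idlOf k n J.1)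
            ⟨insert j I.1, by rw [Finset.card_insert_of_notMem h, I.2]⟩).comp
          (quotFactor k n (Finset.subset_insert j I.1))

/-- The differential `C^q → C^{q+1}` of the Čech-style complex. -/
def kosD (k : Type*) [Field k] (n q : ℕ) :
    KosC k n q →ₗ[MvPolynomial (Fin n) k] KosC k n (q + 1) :=
  DirectSum.toModule _ _ _ (kosDAux k n q)

/-!
Over `k` the complex splits along the monomial basis: a monomial `x^m` survives in `R_I` exactly
when `I` avoids the variables occurring in `x^m`, so its part of the complex is the simplicial
cochain complex of the full simplex on the set `T` of absent variables. When `T ≠ ∅` this simplex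
is a cone with apex any `v ∈ T`, and deleting `v` from `I` (with sign `(-1)^#{i ∈ I | i < v}`)
is a contracting homotopy. On polynomials this contraction is even `R`-linear; only the choice of
apex is made monomial by monomial. Hence the complex is exact in all positive degrees, including
surjectivity onto `C^n` since `C^{n+1} = 0`, while in degree 0 the kernel consists of the
polynomials all of whose monomials involve every variable.
-/

namespace Finset

theorem sum_sum_erase_eq_zero_of_antisymm {ι M : Type*} [DecidableEq ι] [AddCommGroup M]
    (s : Finset ι) (g : ι → ι → M) (hg : ∀ i ∈ s, ∀ j ∈ s, i ≠ j → g j i = -g i j) :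
    ∑ i ∈ s, ∑ j ∈ s.erase i, g i j = 0 := by
  rw [sum_sigma']
  refine sum_involution (fun p _ => ⟨p.2, p.1⟩) ?_ ?_ ?_ ?_
  · rintro ⟨i, j⟩ hp
    simp only [mem_sigma, mem_erase] at hp
    simp [hg i hp.1 j hp.2.2 hp.2.1.symm]
  · rintro ⟨i, j⟩ hp -
    simp only [mem_sigma, mem_erase] at hp
    simpa [Sigma.ext_iff] using fun h _ => hp.2.1 h
  · rintro ⟨i, j⟩ hp
    simp only [mem_sigma, mem_erase] at hp ⊢
    exact ⟨hp.2.2, hp.2.1.symm, hp.1⟩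
  · intros; rfl

end Finset

section CechSign

variable {α : Type*} [LinearOrder α]

def cechSign (j : α) (J : Finset α) : ℤ := (-1) ^ (J.filter (· < j)).card

theorem cechSign_mul_self (j : α) (J : Finset α) : cechSign j J * cechSign j J = 1 := by
  rw [cechSign, ← mul_pow]; norm_num

theorem cechSign_insert_self (j : α) (J : Finset α) :
    cechSign j (insert j J) = cechSign j J := by
  rw [cechSign, cechSign, Finset.filter_insert, if_neg (lt_irrefl j)]

theorem cechSign_erase_self (j : α) (J : Finset α) : cechSign j (J.erase j) = cechSign j J := by
  rw [cechSign, cechSign, Finset.filter_erase, Finset.erase_eq_of_notMem]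
  simp

theorem cechSign_insert_of_lt {i j : α} {J : Finset α} (hi : i ∉ J) (hij : i < j) :
    cechSign j (insert i J) = -cechSign j J := by
  rw [cechSign, cechSign, Finset.filter_insert, if_pos hij,
    Finset.card_insert_of_notMem (by simp [hi]), pow_succ, mul_neg_one]

theorem cechSign_insert_of_le {i j : α} (J : Finset α) (hji : j ≤ i) :
    cechSign j (insert i J) = cechSign j J := by
  rw [cechSign, cechSign, Finset.filter_insert, if_neg hji.not_gt]

theorem cechSign_mul_cechSign_insert_antisymm {i j : α} {J : Finset α} (hi : i ∉ J)
    (hj : j ∉ J) (hij : i ≠ j) :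
    cechSign j J * cechSign i (insert j J) = -(cechSign i J * cechSign j (insert i J)) := by
  rcases hij.lt_or_gt with h | h
  · rw [cechSign_insert_of_le J h.le, cechSign_insert_of_lt hi h]; ring
  · rw [cechSign_insert_of_lt hj h, cechSign_insert_of_le J h.le]; ring

theorem cechSign_mul_cechSign_erase_add {v j : α} {J : Finset α} (hv : v ∈ J) (hj : j ∉ J) :
    cechSign v J * cechSign j (J.erase v) + cechSign j J * cechSign v (insert j J) = 0 := by
  obtain ⟨K, hvK, rfl⟩ : ∃ K, v ∉ K ∧ J = insert v K :=
    ⟨J.erase v, Finset.notMem_erase v J, (Finset.insert_erase hv).symm⟩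
  have hjK : j ∉ K := fun h => hj (Finset.mem_insert_of_mem h)
  rw [Finset.erase_insert hvK, cechSign_insert_self, Finset.insert_comm, cechSign_insert_self]
  rcases (ne_of_mem_of_not_mem hv hj).lt_or_gt with h | h
  · rw [cechSign_insert_of_lt hvK h, cechSign_insert_of_le _ h.le]; ring
  · rw [cechSign_insert_of_le _ h.le, cechSign_insert_of_lt hjK h]; ring

end CechSign

namespace MvPolynomial

theorem mem_span_prod_X_iff {σ A : Type*} [CommSemiring A] [Fintype σ] {f : MvPolynomial σ A} :
    f ∈ Ideal.span {∏ i, (X i : MvPolynomial σ A)} ↔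
      ∀ i, f ∈ Ideal.span {(X i : MvPolynomial σ A)} := by
  have hprod : ∏ i, (X i : MvPolynomial σ A) = monomial (∑ i, Finsupp.single i 1) 1 := by
    rw [monomial_sum_one]; rfl
  simp only [hprod, ← Set.image_singleton (f := fun s => monomial s (1 : A)),
    ← Set.image_singleton (f := (X : σ → MvPolynomial σ A)), mem_ideal_span_monomial_image,
    mem_ideal_span_X_image]
  simp only [Set.mem_singleton_iff, exists_eq_left, Finsupp.le_def]
  have hu : ∀ i, (∑ j, Finsupp.single j 1 : σ →₀ ℕ) i = 1 := fun i => by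
    classical simp [Finsupp.single_apply]
  simp only [hu, Nat.one_le_iff_ne_zero]
  exact ⟨fun h i m hm => h m hm i, fun h m hm i => h i m hm⟩

end MvPolynomial

namespace KoszulCech

variable {k : Type*} [Field k] {n : ℕ}

local notation "R" => MvPolynomial (Fin n) k

-- Total in `J` (zero when `J.card ≠ q`), so that the formulas below need no cardinality proofs.
variable (k n) in
def single (q : ℕ) (J : Finset (Fin n)) : R →ₗ[R] KosC k n q :=
  if h : J.card = q then
    (DirectSum.lof R _ (fun I : {I : Finset (Fin n) // I.card = q} => R ⧸ idlOf k n I.1)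
      ⟨J, h⟩).comp (idlOf k n J).mkQ
  else 0

theorem single_of_card_eq {q : ℕ} {J : Finset (Fin n)} (h : J.card = q) (f : R) :
    single k n q J f =
      DirectSum.lof R _ (fun I : {I : Finset (Fin n) // I.card = q} => R ⧸ idlOf k n I.1)
        ⟨J, h⟩ (Ideal.Quotient.mk (idlOf k n J) f) := by
  rw [single, dif_pos h]; rfl

theorem single_of_card_ne {q : ℕ} {J : Finset (Fin n)} (h : J.card ≠ q) : single k n q J = 0 :=
  dif_neg h

theorem single_apply_eq_zero {q : ℕ} {J : Finset (Fin n)} {f : R} (hf : f ∈ idlOf k n J) :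
    single k n q J f = 0 := by
  by_cases h : J.card = q
  · rw [single_of_card_eq h, Ideal.Quotient.eq_zero_iff_mem.2 hf, map_zero]
  · rw [single_of_card_ne h, LinearMap.zero_apply]

theorem kosD_single (q : ℕ) (J : Finset (Fin n)) (f : R) :
    kosD k n q (single k n q J f) =
      ∑ j ∈ Jᶜ, cechSign j J • single k n (q + 1) (insert j J) f := by
  by_cases hJ : J.card = q
  · rw [single_of_card_eq hJ, kosD, DirectSum.toModule_lof, kosDAux, LinearMap.sum_apply,
      ← Finset.sum_filter_add_sum_filter_not Finset.univ (· ∈ J), Finset.sum_eq_zero, zero_add,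
      Finset.filter_not, Finset.filter_mem_eq_inter, Finset.univ_inter,
      ← Finset.compl_eq_univ_sdiff]
    · refine Finset.sum_congr rfl fun j hj => ?_
      rw [Finset.mem_compl] at hj
      rw [dif_neg hj, single_of_card_eq (by rw [Finset.card_insert_of_notMem hj, hJ]),
        LinearMap.smul_apply, LinearMap.comp_apply, ← cechSign_insert_self j J]
      rfl
    · intro j hj
      rw [dif_pos (Finset.mem_filter.1 hj).2, LinearMap.zero_apply]
  · rw [single_of_card_ne hJ, LinearMap.zero_apply, map_zero]
    refine (Finset.sum_eq_zero fun j hj => ?_).symm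
    rw [Finset.mem_compl] at hj
    rw [single_of_card_ne (by rw [Finset.card_insert_of_notMem hj]; omega), LinearMap.zero_apply,
      smul_zero]

theorem kosD_kosD_single (q : ℕ) (J : Finset (Fin n)) (f : R) :
    kosD k n (q + 1) (kosD k n q (single k n q J f)) = 0 := by
  simp only [kosD_single, map_sum, map_zsmul, Finset.smul_sum, smul_smul, Finset.compl_insert]
  refine Finset.sum_sum_erase_eq_zero_of_antisymm (M := KosC k n (q + 1 + 1)) _ _
    fun i hi j hj hij => ?_
  rw [Finset.mem_compl] at hi hj
  rw [Finset.insert_comm, cechSign_mul_cechSign_insert_antisymm hi hj hij]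
  exact neg_smul (_ : ℤ) (_ : KosC k n (q + 1 + 1))

theorem KosC.induction_on {q : ℕ} {P : KosC k n q → Prop} (x : KosC k n q) (zero : P 0)
    (add : ∀ x y, P x → P y → P (x + y))
    (single_monomial :
      ∀ J : Finset (Fin n), J.card = q → ∀ m c, P (single k n q J (monomial m c))) :
    P x := by
  induction x using DirectSum.induction_on with
  | zero => exact zero
  | add x y hx hy => exact add x y hx hy
  | of I y =>
    obtain ⟨f, rfl⟩ := Ideal.Quotient.mk_surjective y
    rw [← DirectSum.lof_eq_of R, ← single_of_card_eq I.2]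
    induction f using MvPolynomial.induction_on' with
    | monomial m c => exact single_monomial I.1 I.2 m c
    | add f g hf hg => rw [map_add]; exact add _ _ hf hg

theorem kosD_comp_kosD (q : ℕ) : (kosD k n (q + 1)).comp (kosD k n q) = 0 := by
  refine LinearMap.ext fun x => ?_
  induction x using KosC.induction_on with
  | zero => simp
  | add x y hx hy =>
    simp only [LinearMap.comp_apply, map_add, LinearMap.zero_apply] at *
    rw [hx, hy, add_zero]
  | single_monomial J _ m c => exact kosD_kosD_single q J _

variable (k n) in
def cone (v : Fin n) (q : ℕ) (J : Finset (Fin n)) : R →ₗ[R] KosC k n q :=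
  if v ∈ J then cechSign v J • single k n q (J.erase v) else 0

theorem kosD_cone_add_sum_cone (v : Fin n) (q : ℕ) (J : Finset (Fin n)) (f : R) :
    kosD k n q (cone k n v q J f) + ∑ j ∈ Jᶜ, cechSign j J • cone k n v (q + 1) (insert j J) f =
      single k n (q + 1) J f := by
  by_cases hv : v ∈ J
  · have hvJ : v ∉ Jᶜ := fun h => Finset.mem_compl.1 h hv
    simp only [cone, if_pos hv, if_pos (Finset.mem_insert_of_mem hv), LinearMap.smul_apply,
      LinearMap.map_smul_of_tower, kosD_single, Finset.compl_erase, Finset.sum_insert hvJ,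
      smul_add, Finset.smul_sum, smul_smul]
    rw [cechSign_erase_self, cechSign_mul_self, one_smul, Finset.insert_erase hv, add_assoc,
      ← Finset.sum_add_distrib, Finset.sum_eq_zero fun j hj => ?_, add_zero]
    rw [Finset.mem_compl] at hj
    rw [Finset.erase_insert_of_ne (ne_of_mem_of_not_mem hv hj).symm, ← add_smul,
      cechSign_mul_cechSign_erase_add hv hj, zero_smul]
  · have hvJ : v ∈ Jᶜ := Finset.mem_compl.2 hv
    rw [cone, if_neg hv, LinearMap.zero_apply, map_zero, zero_add,
      Finset.sum_eq_single_of_mem v hvJ fun j _ hjv => ?_]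
    · rw [cone, if_pos (Finset.mem_insert_self v J), LinearMap.smul_apply, smul_smul,
        cechSign_insert_self, cechSign_mul_self, one_smul, Finset.erase_insert hv]
    · rw [cone, if_neg, LinearMap.zero_apply, smul_zero]
      simp [Ne.symm hjv, hv]

theorem monomial_mem_idlOf {J : Finset (Fin n)} {m : Fin n →₀ ℕ} {i : Fin n} (hi : i ∈ J)
    (hmi : m i ≠ 0) (c : k) : monomial m c ∈ idlOf k n J := by
  refine mem_ideal_span_X_image.2 fun m' hm' => ⟨i, hi, ?_⟩
  rwa [Finset.mem_singleton.1 (support_monomial_subset hm')]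

-- The apex is a variable absent from `x^m`; a monomial involving every variable vanishes in
-- every `R_J` with `J ≠ ∅`, so it is sent to `0`.
variable (k n) in
def homotopyPoly (q : ℕ) (J : Finset (Fin n)) : R →ₗ[k] KosC k n q :=
  (basisMonomials (Fin n) k).constr k fun m =>
    if h : ∃ v, m v = 0 then cone k n h.choose q J (monomial m 1) else 0

theorem homotopyPoly_monomial (q : ℕ) (J : Finset (Fin n)) (m : Fin n →₀ ℕ) (c : k) :
    homotopyPoly k n q J (monomial m c) =
      if h : ∃ v, m v = 0 then cone k n h.choose q J (monomial m c) else 0 := by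
  have hm : monomial m c = c • basisMonomials (Fin n) k m := by
    rw [coe_basisMonomials, smul_monomial, smul_eq_mul, mul_one]
  rw [homotopyPoly, hm, map_smul, Module.Basis.constr_basis]
  split_ifs <;> simp [LinearMap.map_smul_of_tower]

theorem homotopyPoly_eq_zero_of_mem {q : ℕ} {J : Finset (Fin n)} {f : R}
    (hf : f ∈ idlOf k n J) : homotopyPoly k n q J f = 0 := by
  rw [f.as_sum, map_sum]
  refine Finset.sum_eq_zero fun m hm => ?_
  obtain ⟨i, hi, hmi⟩ := mem_ideal_span_X_image.1 hf m hm
  rw [homotopyPoly_monomial]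
  split_ifs with h
  · have hv := h.choose_spec
    rw [cone]
    split_ifs
    · rw [LinearMap.smul_apply, single_apply_eq_zero (monomial_mem_idlOf (Finset.mem_erase.2
        ⟨fun hiv => hmi (by rwa [hiv]), hi⟩) hmi _), smul_zero]
    · rfl
  · rfl

variable (k n) in
def homotopy (q : ℕ) : KosC k n (q + 1) →ₗ[k] KosC k n q :=
  DirectSum.toModule k _ _ fun I =>
    Submodule.liftQ (M₂ := KosC k n q) ((idlOf k n I.1).restrictScalars k)
        (homotopyPoly k n q I.1)
        (fun _ hf => LinearMap.mem_ker.2 (homotopyPoly_eq_zero_of_mem hf)) ∘ₗ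
      (Submodule.Quotient.restrictScalarsEquiv k _).symm.toLinearMap

theorem homotopy_single {q : ℕ} {J : Finset (Fin n)} (hJ : J.card = q + 1) (f : R) :
    homotopy k n q (single k n (q + 1) J f) = homotopyPoly k n q J f := by
  rw [single_of_card_eq hJ, DirectSum.lof_eq_of, ← DirectSum.lof_eq_of k, homotopy,
    DirectSum.toModule_lof]
  rfl

theorem kosD_homotopy_add_homotopy_kosD_single_monomial {q : ℕ} {J : Finset (Fin n)}
    (hJ : J.card = q + 1) (m : Fin n →₀ ℕ) (c : k) :
    kosD k n q (homotopy k n q (single k n (q + 1) J (monomial m c))) +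
        homotopy k n (q + 1) (kosD k n (q + 1) (single k n (q + 1) J (monomial m c))) =
      single k n (q + 1) J (monomial m c) := by
  have hinsert : ∀ j ∈ Jᶜ, (insert j J).card = q + 1 + 1 := fun j hj => by
    rw [Finset.card_insert_of_notMem (Finset.mem_compl.1 hj), hJ]
  rw [homotopy_single hJ, kosD_single, map_sum,
    Finset.sum_congr rfl fun j hj => by rw [map_zsmul, homotopy_single (hinsert j hj)]]
  simp only [homotopyPoly_monomial]
  split_ifs with h
  · exact kosD_cone_add_sum_cone _ q J _
  · push Not at h
    obtain ⟨i, hi⟩ := Finset.card_pos.1 (by omega : 0 < J.card)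
    rw [single_apply_eq_zero (monomial_mem_idlOf hi (h i) c)]
    simp

theorem kosD_homotopy_add_homotopy_kosD (q : ℕ) (x : KosC k n (q + 1)) :
    kosD k n q (homotopy k n q x) + homotopy k n (q + 1) (kosD k n (q + 1) x) = x := by
  induction x using KosC.induction_on with
  | zero => simp
  | add x y hx hy => rw [map_add, map_add, map_add, map_add, add_add_add_comm, hx, hy]
  | single_monomial J hJ m c => exact kosD_homotopy_add_homotopy_kosD_single_monomial hJ m c

theorem range_kosD_eq_ker_kosD (q : ℕ) :
    LinearMap.range (kosD k n q) = LinearMap.ker (kosD k n (q + 1)) := by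
  refine le_antisymm (LinearMap.range_le_ker_iff.2 (kosD_comp_kosD q)) fun x hx => ?_
  have hx' := kosD_homotopy_add_homotopy_kosD q x
  rw [LinearMap.mem_ker.1 hx, map_zero, add_zero] at hx'
  exact ⟨_, hx'⟩

theorem kosD_surjective {q : ℕ} (hq : n ≤ q + 1) : Function.Surjective (kosD k n q) := by
  have : IsEmpty {I : Finset (Fin n) // I.card = q + 1 + 1} :=
    ⟨fun I => by have := I.1.card_le_univ; rw [I.2, Fintype.card_fin] at this; omega⟩
  rw [← LinearMap.range_eq_top, range_kosD_eq_ker_kosD, LinearMap.ker_eq_top]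
  exact Subsingleton.elim _ _

theorem kosD_single_empty (f : R) :
    kosD k n 0 (single k n 0 ∅ f) = ∑ j, single k n 1 {j} f := by
  simp [kosD_single, cechSign]

theorem sum_single_singleton_eq_zero_iff (f : R) :
    ∑ j, single k n 1 {j} f = 0 ↔ ∀ j, f ∈ Ideal.span {X j} := by
  have hspan : ∀ j : Fin n, Ideal.span {X j} = idlOf k n {j} := fun j => by
    rw [idlOf, Finset.coe_singleton, Set.image_singleton]
  simp only [hspan]
  refine ⟨fun h j => ?_, fun h => Finset.sum_eq_zero fun j _ => single_apply_eq_zero (h j)⟩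
  have hj := DFunLike.congr_fun h ⟨{j}, Finset.card_singleton j⟩
  rw [DFinsupp.finsetSum_apply, Finset.sum_eq_single j (fun i _ hij => ?_) (by simp),
    single_of_card_eq (Finset.card_singleton j), DirectSum.lof_eq_of,
    DirectSum.of_eq_same] at hj
  · exact Ideal.Quotient.eq_zero_iff_mem.1 hj
  · rw [single_of_card_eq (Finset.card_singleton i), DirectSum.lof_eq_of, DirectSum.of_eq_of_ne]
    simpa [Subtype.ext_iff] using hij.symm

end KoszulCech

theorem koszul_cech_resolution_general (k : Type*) [Field k] (n : ℕ) :
    (∀ q, (kosD k n (q + 1)).comp (kosD k n q) = 0) ∧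
    (∀ f : MvPolynomial (Fin n) k,
        kosD k n 0
            (DirectSum.lof (MvPolynomial (Fin n) k) _
              (fun I : {I : Finset (Fin n) // I.card = 0} =>
                MvPolynomial (Fin n) k ⧸ idlOf k n I.1)
              ⟨∅, Finset.card_empty⟩ (Ideal.Quotient.mk (idlOf k n ∅) f)) = 0 ↔
          f ∈ Ideal.span {∏ i : Fin n, (MvPolynomial.X i : MvPolynomial (Fin n) k)}) ∧
    (∀ q, q + 1 ≤ n - 1 →
        LinearMap.range (kosD k n q) = LinearMap.ker (kosD k n (q + 1))) ∧
    Function.Surjective (kosD k n (n - 1)) := by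
  refine ⟨KoszulCech.kosD_comp_kosD, fun f => ?_,
    fun q _ => KoszulCech.range_kosD_eq_ker_kosD q, KoszulCech.kosD_surjective (by omega)⟩
  rw [← KoszulCech.single_of_card_eq, KoszulCech.kosD_single_empty,
    KoszulCech.sum_single_singleton_eq_zero_iff, MvPolynomial.mem_span_prod_X_iff]

/-- For `R = k[x_1,…,x_n]`, `n ≥ 1`, the complex `C^0 = R → ⊕_i R/(x_i) →
⊕_{i<j} R/(x_i,x_j) → ⋯ → R/(x_1,…,x_n)` with Čech-style alternating signs satisfies
`d ∘ d = 0`; the kernel of `C^0 → C^1` is the principal ideal `(x_1 ⋯ x_n)`; it is exact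
at `C^q` for `1 ≤ q ≤ n - 1`; and the last differential `C^{n-1} → C^n` is surjective.
Equivalently, `0 → (x_1⋯x_n) → R → ⊕_i R/(x_i) → ⋯ → R/(x_1,…,x_n) → 0` is exact. -/
theorem koszul_cech_resolution (k : Type*) [Field k] (n : ℕ) (hn : 1 ≤ n) :
    (∀ q, (kosD k n (q + 1)).comp (kosD k n q) = 0) ∧
    (∀ f : MvPolynomial (Fin n) k,
        kosD k n 0
            (DirectSum.lof (MvPolynomial (Fin n) k) _
              (fun I : {I : Finset (Fin n) // I.card = 0} =>
                MvPolynomial (Fin n) k ⧸ idlOf k n I.1)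
              ⟨∅, Finset.card_empty⟩ (Ideal.Quotient.mk (idlOf k n ∅) f)) = 0 ↔
          f ∈ Ideal.span {∏ i : Fin n, (MvPolynomial.X i : MvPolynomial (Fin n) k)}) ∧
    (∀ q, q + 1 ≤ n - 1 →
        LinearMap.range (kosD k n q) = LinearMap.ker (kosD k n (q + 1))) ∧
    Function.Surjective (kosD k n (n - 1)) :=
  koszul_cech_resolution_general k n
end
end

section
/- Let V be a finite-dimensional vector space over a field k equipped with q filtrations F^1, …, F^q, where F^j assigns to each element σ of a finite linearly ordered set Σ_j (with least element η_j and greatest element τ_j) a subspace F^j_σ ⊆ V, monotonically in σ, with F^j_{η_j} = 0 and F^j_{τ_j} = V. Assume the filtrations admit a common splitting: there is a basis B of V such that every F^j_σ is the span of a subset of B. For covers λ_j ∈ Σ'_j define the multigraded piece Gr_{λ_1,…,λ_q}(V) := (⋂_{j=1}^q F^j_{m_+(λ_j)}) / (Σ_{l=1}^q (F^l_{m_-(λ_l)} ∩ ⋂_{j≠l} F^j_{m_+(λ_j)})). Then: (i) for q = 2 and any covers λ_1 ∈ Σ'_1, λ_2 ∈ Σ'_2, the iterated associated graded taken in either order has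 the same dimension, i.e. dim Gr_{λ_2}(Gr_{λ_1}^{F^1}(V), induced F^2) = dim Gr_{λ_1}(Gr_{λ_2}^{F^2}(V), induced F^1) = dim Gr_{λ_1,λ_2}(V); and (ii) dim V = Σ over all multi-indices of covers (λ_1,…,λ_q) ∈ Σ'_1 × ⋯ × Σ'_q of dim Gr_{λ_1,…,λ_q}(V). -/
open scoped Classical

noncomputable section

/-- The dimension of the multigraded piece
`Gr_{λ_1,…,λ_q}(V) = (⋂_j F^j_{m_+(λ_j)}) / (Σ_l (F^l_{m_-(λ_l)} ∩ ⋂_{j ≠ l} F^j_{m_+(λ_j)}))`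
attached to a multi-index `lam` of pairs (covers) for a family of filtrations `F`. -/
def grDim (k : Type*) {V : Type*} [Field k] [AddCommGroup V] [Module k V]
    {q : ℕ} {Sig : Fin q → Type*}
    (F : ∀ j, Sig j → Submodule k V) (lam : ∀ j, Sig j × Sig j) : ℕ :=
  Module.finrank k
    (↥(⨅ j, F j (lam j).2) ⧸
      Submodule.comap (⨅ j, F j (lam j).2).subtype
        (⨆ l, F l (lam l).1 ⊓ ⨅ (j) (_ : j ≠ l), F j (lam j).2))

/-- The dimension of the subquotient `X/(Y ∩ X)` of `V` determined by submodules `X Y ⊆ V`;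
for `Y ≤ X` this is `dim X/Y`. -/
def subquotDim (k : Type*) {V : Type*} [Field k] [AddCommGroup V] [Module k V]
    (X Y : Submodule k V) : ℕ :=
  Module.finrank k (↥X ⧸ Submodule.comap X.subtype Y)

/-!
A common splitting basis `b` assigns to every basis vector `b i` a degree `deg j i ∈ Σ_j` for each
filtration, the least `σ` with `b i ∈ F^j_σ`, and then `F^j_σ` is spanned by the `b i` of degree
`≤ σ`. Spans of sets of basis vectors turn `⊓`, `⊔` into `∩`, `∪` of index sets and the dimension
of a subquotient into the cardinality of a set difference. Hence both iterated graded pieces and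
`Gr_λ(V)` have dimension `#{i | ∀ j, m_-(λ_j) < deg j i ≤ m_+(λ_j)}`. For covers this says
`deg j i = m_+(λ_j)`, and since `F^j_{η_j} = 0` every degree has a lower cover, so each `b i` is
counted in exactly one `Gr_λ(V)`.
-/

open Module

theorem subquotDim_add_finrank_inf {k V : Type*} [Field k] [AddCommGroup V] [Module k V]
    [FiniteDimensional k V] (X Y : Submodule k V) :
    subquotDim k X Y + finrank k ↥(X ⊓ Y) = finrank k X := by
  rw [subquotDim, ← Submodule.map_comap_subtype, ← (X.equivSubtypeMap _).finrank_eq]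
  exact Submodule.finrank_quotient_add_finrank _

namespace Module.Basis

section Semiring

open Submodule

variable {ι R M : Type*} [Semiring R] [AddCommMonoid M] [Module R M] (b : Basis ι R M)

def spanImage : CompleteLatticeHom (Set ι) (Submodule R M) where
  toFun S := span R (b '' S)
  map_sInf' s := by
    ext x
    simp [mem_span_image, Submodule.mem_sInf, Set.subset_sInter_iff]
  map_sSup' s := by
    rw [Set.sSup_eq_sUnion, Set.sUnion_eq_biUnion, Set.image_iUnion₂, span_iUnion₂, sSup_image]

theorem spanImage_apply (S : Set ι) : b.spanImage S = span R (b '' S) := rfl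

theorem eq_spanImage_setOf_mem {W : Submodule R M} (hW : ∃ S, W = span R (b '' S)) :
    W = b.spanImage {i | b i ∈ W} := by
  obtain ⟨S, rfl⟩ := hW
  refine le_antisymm (span_mono (Set.image_mono fun i hi => ?_)) ?_
  · exact subset_span (Set.mem_image_of_mem b hi)
  · exact span_le.2 (Set.image_subset_iff.2 fun _ hi => hi)

theorem exists_eq_spanImage_setOf_le {σ : Type*} [LinearOrder σ] [WellFoundedLT σ]
    (F : σ → Submodule R M) (hmono : Monotone F) {t : σ} (htop : F t = ⊤)
    (hsplit : ∀ s, ∃ S, F s = span R (b '' S)) :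
    ∃ deg : ι → σ, ∀ s, F s = b.spanImage {i | deg i ≤ s} := by
  have hne : ∀ i, {s | b i ∈ F s}.Nonempty := fun i => ⟨t, by simp [htop]⟩
  refine ⟨fun i => wellFounded_lt.min _ (hne i), fun s => ?_⟩
  rw [b.eq_spanImage_setOf_mem (hsplit s)]
  congr 2
  ext i
  exact ⟨fun h => wellFounded_lt.min_le (show s ∈ {s | b i ∈ F s} from h),
    fun h => hmono h (wellFounded_lt.min_mem _ (hne i))⟩

end Semiring

section Field

variable {ι k V : Type*} [Field k] [AddCommGroup V] [Module k V] (b : Basis ι k V)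

theorem finrank_spanImage (S : Set ι) : finrank k (b.spanImage S) = S.ncard := by
  rw [spanImage_apply, Set.image_eq_range, ← Nat.card_coe_set_eq]
  exact finrank_eq_nat_card_basis (.span (b.linearIndependent.comp _ Subtype.val_injective))

variable [Finite ι]

theorem subquotDim_spanImage (X Y : Set ι) :
    subquotDim k (b.spanImage X) (b.spanImage Y) = (X \ Y).ncard := by
  have : FiniteDimensional k V := .of_basis b
  have hdim := subquotDim_add_finrank_inf (b.spanImage X) (b.spanImage Y)
  rw [← map_inf, finrank_spanImage, finrank_spanImage] at hdim
  have hcard : (X ⊓ Y).ncard + (X \ Y).ncard = X.ncard :=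
    Set.ncard_inter_add_ncard_sdiff_eq_ncard X Y
  omega

theorem grDim_eq_ncard {q : ℕ} {Sig : Fin q → Type*} [∀ j, LinearOrder (Sig j)]
    {F : ∀ j, Sig j → Submodule k V} {deg : ∀ j, ι → Sig j}
    (hF : ∀ j s, F j s = b.spanImage {i | deg j i ≤ s}) (lam : ∀ j, Sig j × Sig j) :
    grDim k F lam = {i | ∀ j, deg j i ∈ Set.Ioc (lam j).1 (lam j).2}.ncard := by
  have hgr : grDim k F lam = subquotDim k
      (b.spanImage (⨅ j, {i | deg j i ≤ (lam j).2}))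
      (b.spanImage
        (⨆ l, {i | deg l i ≤ (lam l).1} ⊓ ⨅ (j) (_ : j ≠ l), {i | deg j i ≤ (lam j).2})) := by
    simp only [map_iInf, map_iSup, map_inf, ← hF]
    rfl
  rw [hgr, subquotDim_spanImage]
  congr 1
  ext i
  simp only [Set.iInf_eq_iInter, Set.iSup_eq_iUnion, Set.inf_eq_inter, Set.mem_sdiff,
    Set.mem_iInter, Set.mem_iUnion, Set.mem_inter_iff, Set.mem_ofPred_eq, Set.mem_Ioc, not_exists,
    not_and]
  constructor
  · rintro ⟨hle, hnot⟩ j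
    exact ⟨not_le.1 fun h => hnot j h fun j' _ => hle j', hle j⟩
  · intro h
    exact ⟨fun j => (h j).2, fun l hl _ => not_le.2 (h l).1 hl⟩

/-- `Gr_{(a₂, b₂)}` of the filtration induced by `d₂` on `Gr_{(a₁, b₁)}` of the one given by `d₁`. -/
theorem subquotDim_gr_induced_eq_ncard {α β : Type*} [LinearOrder α] [LinearOrder β]
    (d₁ : ι → α) (d₂ : ι → β) (a₁ b₁ : α) (a₂ b₂ : β) :
    subquotDim k
      (b.spanImage {i | d₂ i ≤ b₂} ⊓ b.spanImage {i | d₁ i ≤ b₁} ⊔ b.spanImage {i | d₁ i ≤ a₁})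
      (b.spanImage {i | d₂ i ≤ a₂} ⊓ b.spanImage {i | d₁ i ≤ b₁} ⊔ b.spanImage {i | d₁ i ≤ a₁}) =
      {i | d₁ i ∈ Set.Ioc a₁ b₁ ∧ d₂ i ∈ Set.Ioc a₂ b₂}.ncard := by
  rw [← map_inf, ← map_sup, ← map_inf, ← map_sup, subquotDim_spanImage]
  congr 1
  ext i
  simp only [Set.inf_eq_inter, Set.sup_eq_union, Set.mem_sdiff, Set.mem_union, Set.mem_inter_iff,
    Set.mem_ofPred_eq, Set.mem_Ioc, ← not_le]
  tauto

end Field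

end Module.Basis

theorem card_eq_sum_ncard_covBy {ι J : Type*} [Fintype ι] [Fintype J] [DecidableEq J]
    {Sig : J → Type*} [∀ j, Fintype (Sig j)] [∀ j, LinearOrder (Sig j)]
    [DecidablePred fun lam : ∀ j, Sig j × Sig j => ∀ j, (lam j).1 ⋖ (lam j).2]
    (deg : ∀ j, ι → Sig j) (hdeg : ∀ j i, ¬IsMin (deg j i)) :
    Fintype.card ι = ∑ lam ∈ Finset.univ.filter
        (fun lam : ∀ j, Sig j × Sig j => ∀ j, (lam j).1 ⋖ (lam j).2),
      {i | ∀ j, deg j i ∈ Set.Ioc (lam j).1 (lam j).2}.ncard := by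
  -- `i` lies in the piece of exactly one multi-index of covers, `j ↦ (pred j i, deg j i)`.
  choose pred hpred using fun j i => exists_covBy_of_wellFoundedGT (hdeg j i)
  let f : ι → ∀ j, Sig j × Sig j := fun i j => (pred j i, deg j i)
  refine (Finset.card_eq_sum_card_fiberwise (f := f) fun i _ => ?_).trans
    (Finset.sum_congr rfl fun lam hlam => ?_)
  · simpa [f] using fun j => hpred j i
  have hIoc : ∀ j, Set.Ioc (lam j).1 (lam j).2 = {(lam j).2} :=
    fun j => ((Finset.mem_filter.1 hlam).2 j).Ioc_eq
  rw [← Set.ncard_coe_finset]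
  congr 1
  ext i
  simp only [Finset.coe_filter, Finset.mem_univ, true_and, Set.mem_ofPred_eq, hIoc,
    Set.mem_singleton_iff]
  constructor
  · rintro rfl j
    rfl
  · intro h
    funext j
    exact Prod.ext ((hpred j i).unique_left (h j ▸ (Finset.mem_filter.1 hlam).2 j)) (h j)

/-- Let `V` be a finite-dimensional `k`-vector space with `q` filtrations `F^j` indexed by
finite linearly ordered sets `Σ_j` (least element `η_j`, greatest `τ_j`, `F^j_{η_j} = 0`,
`F^j_{τ_j} = V`), admitting a common splitting by a basis.  Then (i) for `q = 2` and covers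
`λ_1, λ_2`, the iterated associated graded taken in either order has the same dimension,
equal to `dim Gr_{λ_1,λ_2}(V)` (the induced filtration on a subquotient `F_{σ'}/F_σ` being
the image filtration `(G ∩ F_{σ'} + F_σ)/F_σ`), and (ii)
`dim V = Σ_{(λ_1,…,λ_q)} dim Gr_{λ_1,…,λ_q}(V)` over all multi-indices of covers. -/
theorem grDim_comm_and_sum
    {k V : Type*} [Field k] [AddCommGroup V] [Module k V] [FiniteDimensional k V]
    {q : ℕ} (Sig : Fin q → Type*) [∀ j, Fintype (Sig j)] [∀ j, LinearOrder (Sig j)]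
    (η τ : ∀ j, Sig j)
    (F : ∀ j, Sig j → Submodule k V) (hmono : ∀ j, Monotone (F j))
    (hbot : ∀ j, F j (η j) = ⊥) (htop : ∀ j, F j (τ j) = ⊤)
    (hsplit : ∃ (ι : Type) (B : Module.Basis ι k V), ∀ j σ, ∃ S : Set ι,
        F j σ = Submodule.span k (B '' S)) :
    (∀ (hq : q = 2) (lam : ∀ j, Sig j × Sig j) (_ : ∀ j, (lam j).1 ⋖ (lam j).2),
        subquotDim k
            ((F ⟨1, by omega⟩ (lam ⟨1, by omega⟩).2 ⊓ F ⟨0, by omega⟩ (lam ⟨0, by omega⟩).2)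
              ⊔ F ⟨0, by omega⟩ (lam ⟨0, by omega⟩).1)
            ((F ⟨1, by omega⟩ (lam ⟨1, by omega⟩).1 ⊓ F ⟨0, by omega⟩ (lam ⟨0, by omega⟩).2)
              ⊔ F ⟨0, by omega⟩ (lam ⟨0, by omega⟩).1) = grDim k F lam ∧
        subquotDim k
            ((F ⟨0, by omega⟩ (lam ⟨0, by omega⟩).2 ⊓ F ⟨1, by omega⟩ (lam ⟨1, by omega⟩).2)
              ⊔ F ⟨1, by omega⟩ (lam ⟨1, by omega⟩).1)
            ((F ⟨0, by omega⟩ (lam ⟨0, by omega⟩).1 ⊓ F ⟨1, by omega⟩ (lam ⟨1, by omega⟩).2)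
              ⊔ F ⟨1, by omega⟩ (lam ⟨1, by omega⟩).1) = grDim k F lam) ∧
    Module.finrank k V =
      ∑ lam ∈ Finset.univ.filter
          (fun lam : ∀ j, Sig j × Sig j => ∀ j, (lam j).1 ⋖ (lam j).2),
        grDim k F lam := by
  obtain ⟨ι, B, hB⟩ := hsplit
  have : Fintype ι := FiniteDimensional.fintypeBasisIndex B
  choose deg hF using fun j => B.exists_eq_spanImage_setOf_le (F j) (hmono j) (htop j) (hB j)
  refine ⟨fun hq lam _ => ?_, ?_⟩
  · subst hq
    simp only [hF, B.subquotDim_gr_induced_eq_ncard, B.grDim_eq_ncard hF, Fin.forall_fin_two,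
      Fin.zero_eta, Fin.mk_one, and_comm, and_self]
  · have hdeg : ∀ j i, ¬IsMin (deg j i) := by
      intro j i hmin
      have hle : deg j i ≤ η j := (le_total _ _).elim id (hmin ·)
      have hmem : B i ∈ F j (η j) := by
        rw [hF]
        exact Submodule.subset_span (Set.mem_image_of_mem B hle)
      exact B.ne_zero i (by simpa [hbot] using hmem)
    rw [Module.finrank_eq_card_basis B, card_eq_sum_ncard_covBy deg hdeg]
    exact Finset.sum_congr rfl fun lam _ => (B.grDim_eq_ncard hF lam).symm
end
end

section
/- Let V be a finite-dimensional vector space over a field k equipped with q filtrations F^1, …, F^q, where F^j assigns to each element σ of a finite linearly ordered set Σ_j (with least element η_j and greatest element τ_j) a subspace F^j_σ ⊆ V, monotonically in σ, with F^j_{η_j} = 0 and F^j_{τ_j} = V, and assume there is a basis B of V such that every F^j_σ is the span of a subset of B. Then for every multi-index (σ_1, …, σ_q) ∈ Σ_1 × ⋯ × Σ_q, dim(F^1_{σ_1} ∩ ⋯ ∩ F^q_{σ_q}) = Σ over all (λ_1,…,λ_q) ∈ Σ'_1 × ⋯ × Σ'_q with m_+(λ_j) ≤ σ_j for all j, of dim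 Gr_{λ_1,…,λ_q}(V), where Gr_{λ_1,…,λ_q}(V) := (⋂_{j=1}^q F^j_{m_+(λ_j)}) / (Σ_{l=1}^q (F^l_{m_-(λ_l)} ∩ ⋂_{j≠l} F^j_{m_+(λ_j)})). -/
/-! A basis `B` splitting every filtration gives each basis vector `B i` a level `ν j i ∈ Σ_j`, the
least `s` with `B i ∈ F^j_s`, and then all the subspaces in sight, the intersections
`⋂ F^j_{σ_j}` and the sums defining `Gr_λ`, are spanned by the basis vectors they contain. So
`dim ⋂ F^j_{σ_j}` counts the `i` with `ν j i ≤ σ_j` for all `j`, while `dim Gr_λ` counts those with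
`ν j i = m_+(λ_j)` for all `j`. As `F^j_{η_j} = 0`, every level has a predecessor, and sorting the
former basis vectors by the covers ending at their levels gives the formula. -/

open scoped Classical

noncomputable section

open Submodule

namespace Module.Basis

variable {k V ι : Type*} [Field k] [AddCommGroup V] [Module k V] (B : Basis ι k V)

theorem iInf_span_image {κ : Sort*} (S : κ → Set ι) :
    ⨅ i, span k (B '' S i) = span k (B '' ⋂ i, S i) := by
  ext x
  simp only [mem_iInf, B.mem_span_image, Set.subset_iInter_iff]

theorem span_image_inter (S T : Set ι) :
    span k (B '' S) ⊓ span k (B '' T) = span k (B '' (S ∩ T)) := by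
  ext x
  simp only [mem_inf, B.mem_span_image, Set.subset_inter_iff]

theorem finrank_span_image (S : Set ι) : finrank k (span k (B '' S)) = S.ncard := by
  rw [Set.ncard_def, ← toENat_rank_span_set (B.linearIndependent.linearIndepOn S)]
  rfl

theorem finrank_quotient_comap_span_image {A : Set ι} (hA : A.Finite) (C : Set ι) :
    finrank k (span k (B '' A) ⧸ (span k (B '' C)).comap (span k (B '' A)).subtype) =
      (A \ C).ncard := by
  have : FiniteDimensional k (span k (B '' A)) := FiniteDimensional.span_of_finite k (hA.image B)
  have hsum := finrank_quotient_add_finrank ((span k (B '' C)).comap (span k (B '' A)).subtype)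
  rw [← finrank_map_subtype_eq, map_comap_subtype, span_image_inter, finrank_span_image,
    finrank_span_image, ← Set.ncard_inter_add_ncard_sdiff_eq_ncard A C hA] at hsum
  omega

theorem apply_mem_span_image_iff (S : Set ι) (i : ι) : B i ∈ span k (B '' S) ↔ i ∈ S := by
  simp [B.mem_span_image]

theorem span_image_setOf_mem {N : Submodule k V} (hN : ∃ S, N = span k (B '' S)) :
    span k (B '' {i | B i ∈ N}) = N := by
  obtain ⟨S, rfl⟩ := hN
  simp only [apply_mem_span_image_iff, Set.ofPred_mem_eq]

end Module.Basis

section LevelFiltration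

variable {k V ι α : Type*} [Field k] [AddCommGroup V] [Module k V] [LinearOrder α]

def levelFiltration (B : Module.Basis ι k V) (ν : ι → α) (s : α) : Submodule k V :=
  span k (B '' {i | ν i ≤ s})

variable (B : Module.Basis ι k V)

theorem apply_mem_levelFiltration_iff (ν : ι → α) (i : ι) (s : α) :
    B i ∈ levelFiltration B ν s ↔ ν i ≤ s :=
  B.apply_mem_span_image_iff _ i

theorem exists_levelFiltration_eq [WellFoundedLT α] {G : α → Submodule k V} (hG : Monotone G)
    (hsplit : ∀ s, ∃ S, G s = span k (B '' S)) (hexh : ∀ i, ∃ s, B i ∈ G s) :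
    ∃ ν : ι → α, G = levelFiltration B ν := by
  have wf : WellFounded ((· < ·) : α → α → Prop) := wellFounded_lt
  refine ⟨fun i => wf.min {s | B i ∈ G s} (hexh i), funext fun s => ?_⟩
  have hmem : ∀ i, B i ∈ G s ↔ wf.min {s | B i ∈ G s} (hexh i) ≤ s := fun i =>
    ⟨fun h => wf.min_le h, fun h => hG h (wf.min_mem _ (hexh i))⟩
  simp only [levelFiltration, ← hmem, B.span_image_setOf_mem (hsplit s)]

theorem lt_level_of_levelFiltration_eq_bot {ν : ι → α} {η : α}
    (hbot : levelFiltration B ν η = ⊥) (i : ι) : η < ν i := by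
  by_contra! h
  exact B.ne_zero i <| by simpa [hbot] using (apply_mem_levelFiltration_iff B ν i η).2 h

variable {J : Type*} {Sig : J → Type*} [∀ j, LinearOrder (Sig j)] (ν : ∀ j, ι → Sig j)

theorem iInf_levelFiltration (σ : ∀ j, Sig j) :
    ⨅ j, levelFiltration B (ν j) (σ j) = span k (B '' {i | ∀ j, ν j i ≤ σ j}) := by
  simp only [levelFiltration, B.iInf_span_image, Set.iInter_ofPred]

end LevelFiltration

section Counting

variable {ι : Type*} [Finite ι] {q : ℕ} {Sig : Fin q → Type*} [∀ j, Fintype (Sig j)]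
  [∀ j, LinearOrder (Sig j)]

theorem ncard_level_le_eq_sum_ncard_level_eq (ν : ∀ j, ι → Sig j) (hν : ∀ j i, ∃ b, b ⋖ ν j i)
    (σ : ∀ j, Sig j) :
    {i | ∀ j, ν j i ≤ σ j}.ncard =
      ∑ lam ∈ Finset.univ.filter
          (fun lam : ∀ j, Sig j × Sig j => ∀ j, (lam j).1 ⋖ (lam j).2 ∧ (lam j).2 ≤ σ j),
        {i | ∀ j, ν j i = (lam j).2}.ncard := by
  have := Fintype.ofFinite ι
  choose pred hpred using hν
  simp only [Set.ncard_eq_toFinset_card', Set.toFinset_ofPred]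
  rw [Finset.card_eq_sum_card_fiberwise (f := fun i j => (pred j i, ν j i)) ?mapsTo]
  · refine Finset.sum_congr rfl fun lam hlam => congrArg Finset.card ?_
    ext i
    simp only [Finset.mem_filter, Finset.mem_univ, true_and] at hlam ⊢
    constructor
    · rintro ⟨-, rfl⟩ j
      rfl
    · intro h
      exact ⟨fun j => h j ▸ (hlam j).2,
        funext fun j => Prod.ext ((hpred j i).unique_left (h j ▸ (hlam j).1)) (h j)⟩
  · intro i hi
    simp only [Finset.coe_filter, Finset.mem_univ, true_and, Set.mem_ofPred_eq] at hi ⊢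
    exact fun j => ⟨hpred j i, hi j⟩

end Counting

section Graded

variable {k V ι : Type*} [Field k] [AddCommGroup V] [Module k V] [Finite ι]
  (B : Module.Basis ι k V) {q : ℕ} {Sig : Fin q → Type*} [∀ j, LinearOrder (Sig j)]

theorem grDim_levelFiltration (ν : ∀ j, ι → Sig j) (lam : ∀ j, Sig j × Sig j)
    (hlam : ∀ j, (lam j).1 ⋖ (lam j).2) :
    grDim k (fun j => levelFiltration B (ν j)) lam = {i | ∀ j, ν j i = (lam j).2}.ncard := by
  have hden : (⨆ l, levelFiltration B (ν l) (lam l).1 ⊓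
      ⨅ (j) (_ : j ≠ l), levelFiltration B (ν j) (lam j).2) =
      span k (B '' {i | ∃ l, ν l i ≤ (lam l).1 ∧ ∀ j, j ≠ l → ν j i ≤ (lam j).2}) := by
    simp only [levelFiltration, B.iInf_span_image, B.span_image_inter, ← span_iUnion,
      ← Set.image_iUnion]
    congr
    ext
    simp
  rw [grDim, iInf_levelFiltration, hden, B.finrank_quotient_comap_span_image (Set.toFinite _)]
  congr 1
  ext i
  simp only [Set.mem_sdiff, Set.mem_ofPred_eq, not_exists, not_and]
  constructor
  · rintro ⟨hle, hnot⟩ j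
    exact (hle j).antisymm <| not_lt.1 fun hlt => hnot j ((hlam j).le_of_lt hlt) fun l _ => hle l
  · intro h
    exact ⟨fun j => (h j).le, fun l hl _ => (hlam l).lt.not_ge (h l ▸ hl)⟩

end Graded

theorem dim_inf_filtration_eq_sum_grDim_general
    {k V : Type*} [Field k] [AddCommGroup V] [Module k V] [FiniteDimensional k V]
    {q : ℕ} (Sig : Fin q → Type*) [∀ j, Fintype (Sig j)] [∀ j, LinearOrder (Sig j)]
    (η τ : ∀ j, Sig j)
    (F : ∀ j, Sig j → Submodule k V) (hmono : ∀ j, Monotone (F j))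
    (hbot : ∀ j, F j (η j) = ⊥) (htop : ∀ j, F j (τ j) = ⊤)
    (hsplit : ∃ (ι : Type) (B : Module.Basis ι k V), ∀ j σ, ∃ S : Set ι,
        F j σ = Submodule.span k (B '' S))
    (σ : ∀ j, Sig j) :
    Module.finrank k ↥(⨅ j, F j (σ j)) =
      ∑ lam ∈ Finset.univ.filter
          (fun lam : ∀ j, Sig j × Sig j =>
            ∀ j, (lam j).1 ⋖ (lam j).2 ∧ (lam j).2 ≤ σ j),
        grDim k F lam := by
  obtain ⟨ι, B, hsplit⟩ := hsplit
  have : Finite ι := Module.Finite.finite_basis B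
  choose ν hν using fun j => exists_levelFiltration_eq B (hmono j) (hsplit j)
    fun i => ⟨τ j, htop j ▸ mem_top⟩
  obtain rfl : F = fun j => levelFiltration B (ν j) := funext hν
  have hpred : ∀ j i, ∃ b, b ⋖ ν j i := fun j i =>
    (exists_le_covBy_of_lt (lt_level_of_levelFiltration_eq_bot B (hbot j) i)).imp fun _ => And.right
  rw [iInf_levelFiltration, B.finrank_span_image, ncard_level_le_eq_sum_ncard_level_eq ν hpred σ]
  exact Finset.sum_congr rfl fun lam hlam =>
    (grDim_levelFiltration B ν lam fun j => ((Finset.mem_filter.1 hlam).2 j).1).symm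

/-- Let `V` be a finite-dimensional `k`-vector space with `q` filtrations `F^j` indexed by
finite linearly ordered sets `Σ_j` (least element `η_j`, greatest `τ_j`, `F^j_{η_j} = 0`,
`F^j_{τ_j} = V`), admitting a common splitting by a basis.  Then for every multi-index
`(σ_1,…,σ_q)`, `dim (F^1_{σ_1} ∩ ⋯ ∩ F^q_{σ_q})` equals the sum of
`dim Gr_{λ_1,…,λ_q}(V)` over all multi-indices of covers `(λ_1,…,λ_q)` with
`m_+(λ_j) ≤ σ_j` for all `j`. -/
theorem dim_inf_filtration_eq_sum_grDim
    {k V : Type*} [Field k] [AddCommGroup V] [Module k V] [FiniteDimensional k V]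
    {q : ℕ} (Sig : Fin q → Type*) [∀ j, Fintype (Sig j)] [∀ j, LinearOrder (Sig j)]
    (η τ : ∀ j, Sig j) (hη : ∀ j σ, η j ≤ σ) (hτ : ∀ j σ, σ ≤ τ j)
    (F : ∀ j, Sig j → Submodule k V) (hmono : ∀ j, Monotone (F j))
    (hbot : ∀ j, F j (η j) = ⊥) (htop : ∀ j, F j (τ j) = ⊤)
    (hsplit : ∃ (ι : Type) (B : Module.Basis ι k V), ∀ j σ, ∃ S : Set ι,
        F j σ = Submodule.span k (B '' S))
    (σ : ∀ j, Sig j) :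
    Module.finrank k ↥(⨅ j, F j (σ j)) =
      ∑ lam ∈ Finset.univ.filter
          (fun lam : ∀ j, Sig j × Sig j =>
            ∀ j, (lam j).1 ⋖ (lam j).2 ∧ (lam j).2 ≤ σ j),
        grDim k F lam :=
  dim_inf_filtration_eq_sum_grDim_general Sig η τ F hmono hbot htop hsplit σ
end
end

section
/- With the notation and hypotheses of the context, the parabolic Chern character satisfies chPar = c·exp(D) + exp(D) · Σ_{q=1}^{n} (−1)^q Σ_{I = {i_1<⋯<i_q}} Σ_{λ ∈ Σ'_{i_1}×⋯×Σ'_{i_q}} g_{I,λ} · ∏_{j=1}^{q} J(−1, α_{i_j}(λ_{i_j}), D_{i_j}) · J(−1, 0, D_{i_j})^{−1}. (Here J(−1,α,D)·J(−1,0,D)^{−1} is the formal value of e^{D}(1 − e^{−(α+1)D})/(e^{D} − 1), so this is the identity ch^{Par}(E) = ch^{Vb}(E)e^{D} + e^{D}·Σ_q (−1)^q Σ_I Σ_λ ch(ξ_{I*}Gr^{I}_{λ}) ∏_j e^{D_{i_j}}(1 − e^{−(α_{i_j}(λ_{i_j})+1)D_{i_j}})/(e^{D_{i_j}} − 1).)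 -/
/-!
After multiplying by the unit `∏ᵢ J(0,1,Dᵢ)`, the identity `J(0,1,x)·eˣ = J(-1,0,x)` turns the
right-hand side into `c ∏ᵢ J(-1,0,Dᵢ)` plus, for each `(I, λ)`, the term `g_{I,λ}` times
`∏_{i ∉ I} J(-1,0,Dᵢ) ∏_{i ∈ I} J(-1,α_i(λ_i),Dᵢ)`.  On the left, expanding `c_σ` and exchanging
the sums over `σ` and `λ`, the `σ` that contribute to `g_{I,λ}` form a box `σ_i ≤ m_-(λ_i)`
(`i ∈ I`), so the sum of `∏ᵢ J(α_-(σᵢ),α_+(σᵢ),Dᵢ)` over it factorises into one-variable sums.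
These telescope, since `J(a,b,x) + J(b,c,x) = J(a,c,x)` and `α_-` of the top of a cover is `α_+`
of its bottom: `Σ_{s ≤ b} J(α_-(s),α_+(s),x) = J(-1,α_+(b),x)`.
-/

open scoped Classical

noncomputable section

variable {A : Type*} [CommRing A] [Algebra ℝ A]

/-- `exp x = Σ_{k ≥ 0} x^k/k!` for a nilpotent element `x`, as a finite sum (the terms with
`k ≥ nilpotencyClass x` vanish). -/
def nexp (x : A) : A :=
  ∑ m ∈ Finset.range (nilpotencyClass x), ((m.factorial : ℝ))⁻¹ • x ^ m

/-- `J(a,b,x) = Σ_{k ≥ 0} (-1)^k ((b^{k+1} - a^{k+1})/(k+1)!) x^k`, the formal value of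
`∫_a^b exp (-ρ x) dρ` for a nilpotent element `x` (a finite sum). -/
def Jf (a b : ℝ) (x : A) : A :=
  ∑ m ∈ Finset.range (nilpotencyClass x),
    ((-1 : ℝ) ^ m * ((b ^ (m + 1) - a ^ (m + 1)) / (m + 1).factorial)) • x ^ m

variable {n : ℕ} {Sig : Fin n → Type*} [∀ i, Fintype (Sig i)] [∀ i, LinearOrder (Sig i)]

/-- `c_σ = c + Σ_{q=1}^n (-1)^q Σ_{I = {i_1<⋯<i_q}} Σ_{λ : σ_{i_j} < λ_{i_j} ∀ j} g_{I,λ}`,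
the Chern character of the component sheaf `E_σ` of a locally abelian parabolic bundle,
computed via the Koszul-style resolution.  Here `λ` runs over multi-indices of covers
(risers) `λ_i` of `Σ_i` for `i ∈ I` with `σ_i ≤ m_-(λ_i)`. -/
def cSigma (c : A) (g : ∀ I : Finset (Fin n), ((i : I) → Sig i.1 × Sig i.1) → A)
    (σ : ∀ i, Sig i) : A :=
  c + ∑ I ∈ Finset.univ.filter (fun I : Finset (Fin n) => I.Nonempty),
        (-1 : A) ^ I.card *
          ∑ lam ∈ Finset.univ.filter
              (fun lam : (i : I) → Sig i.1 × Sig i.1 =>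
                ∀ i : I, (lam i).1 ⋖ (lam i).2 ∧ σ i.1 ≤ (lam i).1),
            g I lam

/-- The parabolic Chern character, given by the Iyer–Simpson integral formula evaluated
formally: `chPar = (∏_i J(0,1,D_i))⁻¹ Σ_{σ} c_σ ∏_i J(α_-(σ_i), α_+(σ_i), D_i)`. -/
def chPar (D : Fin n → A) (αm αp : ∀ i, Sig i → ℝ) (c : A)
    (g : ∀ I : Finset (Fin n), ((i : I) → Sig i.1 × Sig i.1) → A) : A :=
  Ring.inverse (∏ i, Jf 0 1 (D i)) *
    ∑ σ : ∀ i, Sig i, cSigma c g σ * ∏ i, Jf (αm i (σ i)) (αp i (σ i)) (D i)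

open Finset

section TruncatedEvaluation

open PowerSeries
open scoped Polynomial

variable {R B : Type*} [CommSemiring R] [CommSemiring B] [Algebra R B]

theorem aeval_trunc_coe_of_pow_eq_zero {x : B} {N : ℕ} (hx : x ^ N = 0) (p : R[X]) :
    Polynomial.aeval x (trunc N (p : R⟦X⟧)) = Polynomial.aeval x p := by
  have hK : p.natDegree < N + p.natDegree + 1 := by omega
  rw [Polynomial.aeval_def, eval₂_trunc_eq_sum_range, Polynomial.aeval_eq_sum_range' hK,
    ← sum_range_add_sum_Ico _ (by omega : N ≤ N + p.natDegree + 1), sum_eq_zero (s := Ico N _),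
    add_zero]
  · refine sum_congr rfl fun i _ => ?_
    rw [Polynomial.coeff_coe, Algebra.smul_def]
  · intro i hi
    rw [pow_eq_zero_of_le (mem_Ico.1 hi).1 hx, smul_zero]

theorem aeval_trunc_mul_of_pow_eq_zero {x : B} {N : ℕ} (hx : x ^ N = 0) (φ ψ : R⟦X⟧) :
    Polynomial.aeval x (trunc N (φ * ψ)) =
      Polynomial.aeval x (trunc N φ) * Polynomial.aeval x (trunc N ψ) := by
  rw [← trunc_trunc_mul_trunc, ← Polynomial.coe_mul, aeval_trunc_coe_of_pow_eq_zero hx, map_mul]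

theorem isUnit_aeval_trunc_of_pow_eq_zero {K : Type*} [Field K] [Algebra K B] {x : B} {N : ℕ}
    (hx : x ^ N = 0) {φ : K⟦X⟧} (hφ : constantCoeff φ ≠ 0) :
    IsUnit (Polynomial.aeval x (trunc N φ)) := by
  refine IsUnit.of_mul_eq_one (Polynomial.aeval x (trunc N φ⁻¹)) ?_
  rw [← aeval_trunc_mul_of_pow_eq_zero hx, PowerSeries.mul_inv_cancel φ hφ, ← Polynomial.coe_one,
    aeval_trunc_coe_of_pow_eq_zero hx, map_one]

/-- The Taylor series of `x ↦ ∫_a^b exp (-ρ x) dρ`, whose coefficients are those of `Jf a b`. -/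
def integralExpSeries (a b : ℝ) : ℝ⟦X⟧ :=
  PowerSeries.mk fun m => (-1) ^ m * ((b ^ (m + 1) - a ^ (m + 1)) / (m + 1).factorial)

theorem constantCoeff_integralExpSeries (a b : ℝ) :
    constantCoeff (integralExpSeries a b) = b - a := by
  simp [integralExpSeries, ← coeff_zero_eq_constantCoeff_apply]

theorem X_mul_integralExpSeries (a b : ℝ) :
    X * integralExpSeries a b = rescale (-a) (exp ℝ) - rescale (-b) (exp ℝ) := by
  ext (_ | m)
  · simp only [coeff_zero_X_mul, map_sub, coeff_rescale, pow_zero, one_mul, sub_self]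
  · rw [coeff_succ_X_mul, integralExpSeries, coeff_mk, map_sub, coeff_rescale, coeff_rescale,
      coeff_exp, neg_pow a, neg_pow b]
    simp only [pow_succ, eq_ratCast, Rat.cast_div, Rat.cast_one, Rat.cast_natCast]
    ring

/-- `∫_{-1}^0 e^{-ρx} dρ = e^x ∫_0^1 e^{-ρx} dρ`, checked after multiplying by the
non-zero-divisor `X`, which turns both integrals into differences of exponentials. -/
theorem integralExpSeries_zero_one_mul_exp :
    integralExpSeries 0 1 * exp ℝ = integralExpSeries (-1) 0 := by
  refine mul_left_cancel₀ (X_ne_zero (R := ℝ)) ?_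
  have hmul (a : ℝ) : rescale a (exp ℝ) * exp ℝ = rescale (a + 1) (exp ℝ) := by
    simpa [rescale_one] using exp_mul_exp_eq_exp_add a 1
  rw [← mul_assoc, X_mul_integralExpSeries, X_mul_integralExpSeries, sub_mul, hmul, hmul]
  norm_num

theorem Jf_eq_aeval_trunc (a b : ℝ) (x : A) :
    Jf a b x = Polynomial.aeval x (trunc (nilpotencyClass x) (integralExpSeries a b)) := by
  rw [Polynomial.aeval_def, eval₂_trunc_eq_sum_range, Jf]
  refine sum_congr rfl fun m _ => ?_
  rw [integralExpSeries, coeff_mk, Algebra.smul_def]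

theorem nexp_eq_aeval_trunc (x : A) :
    nexp x = Polynomial.aeval x (trunc (nilpotencyClass x) (exp ℝ)) := by
  rw [Polynomial.aeval_def, eval₂_trunc_eq_sum_range, nexp]
  refine sum_congr rfl fun m _ => ?_
  rw [coeff_exp, Algebra.smul_def]
  simp

theorem Jf_zero_one_mul_nexp {x : A} (hx : IsNilpotent x) : Jf 0 1 x * nexp x = Jf (-1) 0 x := by
  rw [Jf_eq_aeval_trunc, nexp_eq_aeval_trunc,
    ← aeval_trunc_mul_of_pow_eq_zero (pow_nilpotencyClass hx), integralExpSeries_zero_one_mul_exp,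
    Jf_eq_aeval_trunc]

theorem isUnit_Jf {x : A} (hx : IsNilpotent x) {a b : ℝ} (hab : a ≠ b) : IsUnit (Jf a b x) := by
  rw [Jf_eq_aeval_trunc]
  refine isUnit_aeval_trunc_of_pow_eq_zero (pow_nilpotencyClass hx) ?_
  rw [constantCoeff_integralExpSeries]
  exact sub_ne_zero.2 hab.symm

end TruncatedEvaluation

theorem Jf_add_Jf (a b c : ℝ) (x : A) : Jf a b x + Jf b c x = Jf a c x := by
  rw [Jf, Jf, Jf, ← sum_add_distrib]
  refine sum_congr rfl fun m _ => ?_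
  rw [← add_smul]
  ring_nf

theorem nexp_sum {ι : Type*} (s : Finset ι) {D : ι → A} (hD : ∀ i, IsNilpotent (D i)) :
    nexp (∑ i ∈ s, D i) = ∏ i ∈ s, nexp (D i) := by
  -- `IsNilpotent.exp` lives on `ℚ`-modules; through `ℚ → ℝ` it is `nexp`.
  let _ : Module ℚ A := Module.compHom A (algebraMap ℚ ℝ)
  have hexp (x : A) : nexp x = IsNilpotent.exp x := by
    refine sum_congr rfl fun m _ => ?_
    show _ = algebraMap ℚ ℝ (m.factorial : ℚ)⁻¹ • x ^ m
    simp
  simp only [hexp]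
  induction s using Finset.cons_induction with
  | empty => simp
  | cons a s ha ih =>
    rw [sum_cons, prod_cons, ← ih, IsNilpotent.exp_add_of_commute (Commute.all _ _) (hD a)
      (isNilpotent_sum fun i _ => hD i)]

theorem sum_filter_le_of_covBy {S β M : Type*} [Fintype S] [LinearOrder S] [AddCommMonoid M]
    (J : β → β → M) (hJ : ∀ a b c, J a b + J b c = J a c) {F G : S → β}
    (hcov : ∀ s s', s ⋖ s' → F s' = G s) {η : S} (hη : ∀ s, η ≤ s) (b : S) :
    ∑ s with s ≤ b, J (F s) (G s) = J (F η) (G b) := by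
  induction b using WellFoundedLT.induction with
  | _ b ih =>
    by_cases hb : IsMin b
    · obtain rfl : b = η := le_antisymm (hb (hη b)) (hη b)
      have hIic : univ.filter (· ≤ b) = {b} := by
        ext s
        simpa using (hη s).ge_iff_eq'
      rw [hIic, sum_singleton]
    · obtain ⟨b', hb'⟩ := exists_covBy_of_wellFoundedGT hb
      have hIic : univ.filter (· ≤ b) = insert b (univ.filter (· ≤ b')) := by
        ext s
        simp [le_iff_eq_or_lt, hb'.lt_iff_le_left]
      rw [hIic, sum_insert (by simpa using hb'.lt), ih b' hb'.lt, hcov b' b hb', add_comm, hJ]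

theorem sum_of_covBy {S β M : Type*} [Fintype S] [LinearOrder S] [AddCommMonoid M]
    (J : β → β → M) (hJ : ∀ a b c, J a b + J b c = J a c) {F G : S → β}
    (hcov : ∀ s s', s ⋖ s' → F s' = G s) {η τ : S} (hη : ∀ s, η ≤ s) (hτ : ∀ s, s ≤ τ) :
    ∑ s, J (F s) (G s) = J (F η) (G τ) := by
  rw [← sum_filter_le_of_covBy J hJ hcov hη τ, filter_true_of_mem fun s _ => hτ s]

theorem prod_mul_prod_mul_inverse {ι M : Type*} [Fintype ι] [DecidableEq ι]
    [CommMonoidWithZero M] (I : Finset ι) {u : ι → M} (hu : ∀ i, IsUnit (u i)) (f : I → M) :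
    (∏ i, u i) * ∏ i : I, (f i * Ring.inverse (u i)) =
      ∏ i, if h : i ∈ I then f ⟨i, h⟩ else u i := by
  have hcancel : ∏ i : I, u i * (f i * Ring.inverse (u i)) = ∏ i : I, f i :=
    prod_congr rfl fun i _ => by rw [mul_left_comm, Ring.mul_inverse_cancel _ (hu i), mul_one]
  rw [← prod_mul_prod_compl I, ← prod_mul_prod_compl I, prod_dite_of_true fun _ => id,
    prod_dite_of_false fun _ => mem_compl.1, prod_coe_sort Iᶜ (u ·), ← prod_coe_sort I (u ·),
    mul_right_comm, ← prod_mul_distrib, hcancel]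

theorem sum_filter_le_prod {ι M : Type*} [Fintype ι] [DecidableEq ι] [CommSemiring M]
    {S : ι → Type*} [∀ i, Fintype (S i)] [∀ i, LE (S i)] [∀ i, DecidableLE (S i)]
    (w : ∀ i, S i → M) (I : Finset ι) (b : ∀ i : I, S i) :
    ∑ σ : (∀ i, S i) with ∀ i : I, σ i ≤ b i, ∏ i, w i (σ i) =
      ∏ i, if h : i ∈ I then ∑ s with s ≤ b ⟨i, h⟩, w i s else ∑ s, w i s := by
  have hbox : univ.filter (fun σ : ∀ i, S i => ∀ i : I, σ i ≤ b i) =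
      Fintype.piFinset fun i => if h : i ∈ I then univ.filter (· ≤ b ⟨i, h⟩) else univ := by
    ext σ
    simp only [mem_filter, mem_univ, true_and, Fintype.mem_piFinset, Subtype.forall]
    refine forall_congr' fun i => ?_
    split_ifs with h <;> simp [h]
  rw [hbox, ← prod_univ_sum]
  exact prod_congr rfl fun i _ => apply_dite (∑ s ∈ ·, w i s) _ _ _

theorem sum_cSigma_mul_prod {R : Type*} [CommRing R] (c : R)
    (g : ∀ I : Finset (Fin n), ((i : I) → Sig i.1 × Sig i.1) → R)
    (w : ∀ i, Sig i → R) (V₀ : Fin n → R) (V : ∀ i, Sig i × Sig i → R)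
    (hV₀ : ∀ i, ∑ s, w i s = V₀ i)
    (hV : ∀ i (p : Sig i × Sig i), p.1 ⋖ p.2 → ∑ s with s ≤ p.1, w i s = V i p) :
    ∑ σ, cSigma c g σ * ∏ i, w i (σ i) =
      c * ∏ i, V₀ i +
        ∑ I : Finset (Fin n) with I.Nonempty, (-1 : R) ^ I.card *
          ∑ lam : (i : I) → Sig i.1 × Sig i.1 with ∀ i : I, (lam i).1 ⋖ (lam i).2,
            g I lam * ∏ i, if h : i ∈ I then V i (lam ⟨i, h⟩) else V₀ i := by
  have hbox (I : Finset (Fin n)) (lam : (i : I) → Sig i.1 × Sig i.1)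
      (hlam : ∀ i : I, (lam i).1 ⋖ (lam i).2) :
      ∑ σ : (∀ i, Sig i) with ∀ i : I, σ i ≤ (lam i).1, ∏ i, w i (σ i) =
        ∏ i, if h : i ∈ I then V i (lam ⟨i, h⟩) else V₀ i := by
    refine (sum_filter_le_prod w I (fun i => (lam i).1)).trans ?_
    refine prod_congr rfl fun i _ => ?_
    split_ifs with h
    · exact hV i _ (hlam ⟨i, h⟩)
    · exact hV₀ i
  simp only [cSigma, add_mul, sum_add_distrib, sum_mul, mul_assoc]
  congr 1
  · rw [← mul_sum, ← Fintype.piFinset_univ, ← prod_univ_sum]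
    simp only [hV₀]
  · rw [sum_comm]
    refine sum_congr rfl fun I _ => ?_
    rw [← mul_sum]
    congr 1
    rw [sum_comm' (t' := univ.filter fun lam : (i : I) → Sig i.1 × Sig i.1 =>
        ∀ i : I, (lam i).1 ⋖ (lam i).2)
      (s' := fun lam => univ.filter fun σ : ∀ i, Sig i => ∀ i : I, σ i ≤ (lam i).1)
      (fun σ lam => by simp [forall_and, and_comm])]
    refine sum_congr rfl fun lam hlam => ?_
    rw [← mul_sum, hbox I lam (mem_filter.1 hlam).2]

theorem chPar_eq_bigequation_general
    {A : Type*} [CommRing A] [Algebra ℝ A]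
    {n : ℕ}
    {Sig : Fin n → Type*} [∀ i, Fintype (Sig i)] [∀ i, LinearOrder (Sig i)]
    (D : Fin n → A) (hD : ∀ i, IsNilpotent (D i))
    (η τ : ∀ i, Sig i) (hη : ∀ i σ, η i ≤ σ) (hτ : ∀ i σ, σ ≤ τ i)
    (α : ∀ i, Sig i × Sig i → ℝ)
    (αp αm : ∀ i, Sig i → ℝ)
    (hαpτ : ∀ i, αp i (τ i) = 0)
    (hαpc : ∀ i (σ σ' : Sig i), σ ⋖ σ' → αp i σ = α i (σ, σ'))
    (hαmη : ∀ i, αm i (η i) = -1)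
    (hαmc : ∀ i (σ σ' : Sig i), σ ⋖ σ' → αm i σ' = α i (σ, σ'))
    (c : A)
    (g : ∀ I : Finset (Fin n), ((i : I) → Sig i.1 × Sig i.1) → A) :
    chPar D αm αp c g =
      c * nexp (∑ i, D i) +
        nexp (∑ i, D i) *
          ∑ I ∈ Finset.univ.filter (fun I : Finset (Fin n) => I.Nonempty),
            (-1 : A) ^ I.card *
              ∑ lam ∈ Finset.univ.filter
                  (fun lam : (i : I) → Sig i.1 × Sig i.1 =>
                    ∀ i : I, (lam i).1 ⋖ (lam i).2),
                g I lam *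
                  ∏ i : I,
                    (Jf (-1) (α i.1 (lam i)) (D i.1) *
                      Ring.inverse (Jf (-1) 0 (D i.1))) := by
  have hP : IsUnit (∏ i, Jf 0 1 (D i)) :=
    IsUnit.prod_univ_iff.2 fun i => isUnit_Jf (hD i) zero_ne_one
  have hPE : (∏ i, Jf 0 1 (D i)) * nexp (∑ i, D i) = ∏ i, Jf (-1) 0 (D i) := by
    rw [nexp_sum _ hD, ← prod_mul_distrib]
    exact prod_congr rfl fun i _ => Jf_zero_one_mul_nexp (hD i)
  have hcov i (s s' : Sig i) (h : s ⋖ s') : αm i s' = αp i s :=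
    (hαmc i s s' h).trans (hαpc i s s' h).symm
  have hV₀ i : ∑ s, Jf (αm i s) (αp i s) (D i) = Jf (-1) 0 (D i) := by
    rw [sum_of_covBy (Jf · · (D i)) (Jf_add_Jf · · · _) (hcov i) (hη i) (hτ i), hαmη, hαpτ]
  have hV i (p : Sig i × Sig i) (hp : p.1 ⋖ p.2) :
      ∑ s with s ≤ p.1, Jf (αm i s) (αp i s) (D i) = Jf (-1) (α i p) (D i) := by
    rw [sum_filter_le_of_covBy (Jf · · (D i)) (Jf_add_Jf · · · _) (hcov i) (hη i), hαmη,
      hαpc i _ _ hp]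
  set Q := ∏ i, Jf (-1) 0 (D i)
  rw [chPar, Ring.inverse_mul_eq_iff_eq_mul _ _ _ hP, sum_cSigma_mul_prod c g _ _ _ hV₀ hV,
    mul_add, mul_left_comm _ c, hPE, ← mul_assoc, hPE, mul_sum _ _ Q]
  congr 1
  refine sum_congr rfl fun I _ => ?_
  rw [mul_left_comm, mul_sum _ _ Q]
  congr 1
  refine sum_congr rfl fun lam _ => ?_
  rw [mul_left_comm, prod_mul_prod_mul_inverse I fun i => isUnit_Jf (hD i) (by norm_num)]

/-- Theorem 3.6 (`bigequationtheorem`): the parabolic Chern character of a locally abelian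
parabolic bundle satisfies
`ch^{Par}(E) = ch^{Vb}(E) e^{D} + e^{D} Σ_{q=1}^n (-1)^q Σ_{I} Σ_{λ} ch(ξ_{I*} Gr^I_λ)
  ∏_j e^{D_{i_j}} (1 - e^{-(α_{i_j}(λ_{i_j})+1) D_{i_j}})/(e^{D_{i_j}} - 1)`,
the last factor being `J(-1, α_{i_j}(λ_{i_j}), D_{i_j}) ⬝ J(-1, 0, D_{i_j})⁻¹`. -/
theorem chPar_eq_bigequation
    {A : Type*} [CommRing A] [Algebra ℝ A]
    {n : ℕ} (hn : 1 ≤ n)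
    {Sig : Fin n → Type*} [∀ i, Fintype (Sig i)] [∀ i, LinearOrder (Sig i)]
    [∀ i, Nontrivial (Sig i)]
    (D : Fin n → A) (hD : ∀ i, IsNilpotent (D i))
    (η τ : ∀ i, Sig i) (hη : ∀ i σ, η i ≤ σ) (hτ : ∀ i σ, σ ≤ τ i)
    (α : ∀ i, Sig i × Sig i → ℝ)
    (hα : ∀ i p, p.1 ⋖ p.2 → α i p ∈ Set.Ioc (-1 : ℝ) 0)
    (hαmono : ∀ i (p p' : Sig i × Sig i),
        p.1 ⋖ p.2 → p'.1 ⋖ p'.2 → p.1 ≤ p'.1 → α i p ≤ α i p')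
    (αp αm : ∀ i, Sig i → ℝ)
    (hαpτ : ∀ i, αp i (τ i) = 0)
    (hαpc : ∀ i (σ σ' : Sig i), σ ⋖ σ' → αp i σ = α i (σ, σ'))
    (hαmη : ∀ i, αm i (η i) = -1)
    (hαmc : ∀ i (σ σ' : Sig i), σ ⋖ σ' → αm i σ' = α i (σ, σ'))
    (c : A)
    (g : ∀ I : Finset (Fin n), ((i : I) → Sig i.1 × Sig i.1) → A) :
    chPar D αm αp c g =
      c * nexp (∑ i, D i) +
        nexp (∑ i, D i) *
          ∑ I ∈ Finset.univ.filter (fun I : Finset (Fin n) => I.Nonempty),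
            (-1 : A) ^ I.card *
              ∑ lam ∈ Finset.univ.filter
                  (fun lam : (i : I) → Sig i.1 × Sig i.1 =>
                    ∀ i : I, (lam i).1 ⋖ (lam i).2),
                g I lam *
                  ∏ i : I,
                    (Jf (-1) (α i.1 (lam i)) (D i.1) *
                      Ring.inverse (Jf (-1) 0 (D i.1))) :=
  chPar_eq_bigequation_general D hD η τ hη hτ α αp αm hαpτ hαpc hαmη hαmc c g
end
end
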